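/- arXiv:2603.10884 — 4 statements merged into one kernel-verified Lean document; each statement's English description precedes it below -/
import Mathlib

section
/- Monotonicity of growth rate under equivariant retracts: Let G be a group generated by a finite symmetric set S and H a group generated by a finite symmetric set T. Let A : G → G and B : H → H be group endomorphisms, and let ι : H → G and r : G → H be group homomorphisms with r ∘ ι = id_H and A ∘ ι = ι ∘ B. Then γ_B ≤ γ_A, where the growth rates are computed with respect to T and S respectively. (This is the second inequality established in the proof of Theorem 5.2, using that a retract inclusion coarsely preserves word length.) -/
open Filter
open scoped ENNReal

/-- The word length of `g` with respect to a generating set `S`: the least `n`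
such that `g` is a product of `n` elements of `S` (so the identity has length `0`). -/
noncomputable def wordLength {G : Type*} [Group G] (S : Set G) (g : G) : ℕ :=
  sInf {n : ℕ | ∃ l : List G, l.length = n ∧ (∀ x ∈ l, x ∈ S) ∧ l.prod = g}

/-- The growth rate of a group endomorphism `A : G → G` with respect to a
generating set `S`:
`γ_A = sup_{g ∈ G} limsup_{n → ∞} (1/n)·log(max(ℓ_S(Aⁿ(g)), 1))`, valued in `[0, ∞]`. -/
noncomputable def growthRate {G : Type*} [Group G] (S : Set G) (A : G →* G) : ℝ≥0∞ :=
  ⨆ g : G, Filter.atTop.limsup fun n : ℕ =>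
    ENNReal.ofReal (Real.log ((max (wordLength S ((⇑A)^[n] g)) 1 : ℕ) : ℝ) / (n : ℝ))

/-!
A retraction `r` with `r ∘ ι = id` recovers `Bⁿ h` as `r (Aⁿ (ι h))`, and a homomorphism out of a
group generated by the finite set `S` stretches word length by at most a constant factor `C`.
Hence `ℓ_T (Bⁿ h) ≤ C · ℓ_S (Aⁿ (ι h))`, and a constant factor contributes `log C / n → 0` to
the exponential growth rate of the orbit.
-/

open Topology

section WordLength

variable {G H : Type*} [Group G] [Group H] {S : Set G} {T : Set H}

theorem Submonoid.closure_eq_top_of_inv_eq (hSsym : S⁻¹ = S)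
    (hSgen : Subgroup.closure S = ⊤) : Submonoid.closure S = ⊤ := by
  rw [← Set.union_self S, ← congrArg (S ∪ ·) hSsym, ← Subgroup.closure_toSubmonoid, hSgen]
  rfl

theorem wordLength_prod_le_length {l : List G} (hl : ∀ x ∈ l, x ∈ S) :
    wordLength S l.prod ≤ l.length :=
  Nat.sInf_le ⟨l, rfl, hl, rfl⟩

theorem exists_list_length_eq_wordLength {g : G} (hg : g ∈ Submonoid.closure S) :
    ∃ l : List G, l.length = wordLength S g ∧ (∀ x ∈ l, x ∈ S) ∧ l.prod = g := by
  obtain ⟨l, hl, rfl⟩ := Submonoid.exists_list_of_mem_closure hg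
  exact Nat.sInf_mem (s := {n | ∃ l', l'.length = n ∧ (∀ x ∈ l', x ∈ S) ∧ l'.prod = l.prod})
    ⟨l.length, l, rfl, hl, rfl⟩

theorem wordLength_mul_le {x y : G} (hx : x ∈ Submonoid.closure S)
    (hy : y ∈ Submonoid.closure S) : wordLength S (x * y) ≤ wordLength S x + wordLength S y := by
  obtain ⟨lx, hlx, hlxS, rfl⟩ := exists_list_length_eq_wordLength hx
  obtain ⟨ly, hly, hlyS, rfl⟩ := exists_list_length_eq_wordLength hy
  rw [← hlx, ← hly, ← List.length_append, ← List.prod_append]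
  exact wordLength_prod_le_length fun a ha => (List.mem_append.mp ha).elim (hlxS a) (hlyS a)

theorem wordLength_map_le_mul (hT : Submonoid.closure T = ⊤) (φ : G →* H) {C : ℕ}
    (hC : ∀ s ∈ S, wordLength T (φ s) ≤ C) {g : G} (hg : g ∈ Submonoid.closure S) :
    wordLength T (φ g) ≤ C * wordLength S g := by
  obtain ⟨l, hl, hS, rfl⟩ := exists_list_length_eq_wordLength hg
  rw [← hl]
  clear hl hg
  induction l with
  | nil => simpa using wordLength_prod_le_length (S := T) (l := []) (by simp)
  | cons a l ih =>
    simp only [List.forall_mem_cons] at hS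
    calc wordLength T (φ (a :: l).prod)
        ≤ wordLength T (φ a) + wordLength T (φ l.prod) := by
          rw [List.prod_cons, map_mul]
          exact wordLength_mul_le (by simp [hT]) (by simp [hT])
      _ ≤ C + C * l.length := add_le_add (hC a hS.1) (ih hS.2)
      _ = C * (a :: l).length := by rw [List.length_cons]; ring

theorem exists_wordLength_map_le_mul (hS : S.Finite) (hT : Submonoid.closure T = ⊤)
    (φ : G →* H) : ∃ C : ℕ, ∀ g ∈ Submonoid.closure S, wordLength T (φ g) ≤ C * wordLength S g := by
  obtain ⟨C, hC⟩ := (hS.image fun s => wordLength T (φ s)).bddAbove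
  exact ⟨C, fun g => wordLength_map_le_mul hT φ fun s hs => hC ⟨s, hs, rfl⟩⟩

end WordLength

noncomputable def expGrowthRate (a : ℕ → ℕ) : ℝ≥0∞ :=
  atTop.limsup fun n => ENNReal.ofReal (Real.log ((max (a n) 1 : ℕ) : ℝ) / n)

theorem growthRate_eq_iSup_expGrowthRate {G : Type*} [Group G] (S : Set G) (A : G →* G) :
    growthRate S A = ⨆ g, expGrowthRate fun n => wordLength S ((⇑A)^[n] g) :=
  rfl

theorem expGrowthRate_le_of_le_mul {a b : ℕ → ℕ} {C : ℕ} (h : ∀ n, a n ≤ C * b n) :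
    expGrowthRate a ≤ expGrowthRate b := by
  have hmax (n : ℕ) : ((max (a n) 1 : ℕ) : ℝ) ≤ (C + 1) * (max (b n) 1 : ℕ) := by
    norm_cast
    exact max_le ((h n).trans (Nat.mul_le_mul C.le_succ (le_max_left _ _)))
      (Nat.one_le_iff_ne_zero.mpr (by positivity))
  have hpoint (n : ℕ) : ENNReal.ofReal (Real.log ((max (a n) 1 : ℕ) : ℝ) / n) ≤
      ENNReal.ofReal (Real.log (C + 1) / n) +
        ENNReal.ofReal (Real.log ((max (b n) 1 : ℕ) : ℝ) / n) := by
    refine (ENNReal.ofReal_le_ofReal ?_).trans ENNReal.ofReal_add_le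
    rw [← add_div, ← Real.log_mul (by positivity) (by positivity)]
    exact div_le_div_of_nonneg_right (Real.log_le_log (by positivity) (hmax n)) n.cast_nonneg
  have hvanish : Tendsto (fun n : ℕ => ENNReal.ofReal (Real.log (C + 1) / n)) atTop (𝓝 0) := by
    simpa using ENNReal.tendsto_ofReal
      (tendsto_natCast_atTop_atTop.const_div_atTop (Real.log (C + 1)))
  calc expGrowthRate a
      ≤ atTop.limsup ((fun n : ℕ => ENNReal.ofReal (Real.log (C + 1) / n)) + fun n =>
          ENNReal.ofReal (Real.log ((max (b n) 1 : ℕ) : ℝ) / n)) :=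
        limsup_le_limsup (Eventually.of_forall hpoint)
    _ = expGrowthRate b := ENNReal.limsup_add_of_left_tendsto_zero hvanish _

theorem growthRate_le_of_retract_general
    {G H : Type*} [Group G] [Group H]
    (S : Set G) (hSfin : S.Finite) (hSsym : S⁻¹ = S) (hSgen : Subgroup.closure S = ⊤)
    (T : Set H) (hTsym : T⁻¹ = T) (hTgen : Subgroup.closure T = ⊤)
    (A : G →* G) (B : H →* H) (ι : H →* G) (r : G →* H)
    (hrι : r.comp ι = MonoidHom.id H) (hAι : A.comp ι = ι.comp B) :
    growthRate T B ≤ growthRate S A := by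
  have hS := Submonoid.closure_eq_top_of_inv_eq hSsym hSgen
  obtain ⟨C, hC⟩ :=
    exists_wordLength_map_le_mul hSfin (Submonoid.closure_eq_top_of_inv_eq hTsym hTgen) r
  have hιB : Function.Semiconj ι B A := fun h => DFunLike.congr_fun hAι h |>.symm
  rw [growthRate_eq_iSup_expGrowthRate, growthRate_eq_iSup_expGrowthRate]
  refine iSup_le fun h => le_iSup_of_le (ι h) (expGrowthRate_le_of_le_mul (C := C) fun n => ?_)
  calc wordLength T ((⇑B)^[n] h) = wordLength T (r (ι ((⇑B)^[n] h))) := by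
        rw [← MonoidHom.comp_apply, hrι, MonoidHom.id_apply]
    _ ≤ C * wordLength S ((⇑A)^[n] (ι h)) := by
        rw [(hιB.iterate_right n).eq]
        exact hC _ (by simp [hS])

/-- Monotonicity of growth rate under equivariant retracts: if `ι : H → G` and
`r : G → H` are homomorphisms with `r ∘ ι = id_H` and `A ∘ ι = ι ∘ B`, then
`γ_B ≤ γ_A`. -/
theorem growthRate_le_of_retract
    {G H : Type*} [Group G] [Group H]
    (S : Set G) (hSfin : S.Finite) (hSsym : S⁻¹ = S) (hSgen : Subgroup.closure S = ⊤)
    (T : Set H) (hTfin : T.Finite) (hTsym : T⁻¹ = T) (hTgen : Subgroup.closure T = ⊤)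
    (A : G →* G) (B : H →* H) (ι : H →* G) (r : G →* H)
    (hrι : r.comp ι = MonoidHom.id H) (hAι : A.comp ι = ι.comp B) :
    growthRate T B ≤ growthRate S A :=
  growthRate_le_of_retract_general S hSfin hSsym hSgen T hTsym hTgen A B ι r hrι hAι
end

section
/- Mirrored-pair cancellation forces mirrored multisets: Let X be a type and σ : X → X an involution (σ ∘ σ = id). Let M₁, M₂ be multisets over X such that M₁ + M₂ can be partitioned into mirrored pairs, i.e. there is a multiset P over X with M₁ + M₂ = P + P.map σ, and suppose that neither M₁ nor M₂ contains a mirrored pair, i.e. for i = 1, 2 there is no x ∈ X with the multiset {x, σ(x)} contained in Mᵢ. Then M₂ = M₁.map σ. (This is the combinatorial core of Corollary 1.9(1): the prime factors of K₁ together with those of −K₂ group into mirrored pairs, no pair occurring within a single side, forcing K₁ = K₂.) -/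
/-- Mirrored-pair cancellation forces mirrored multisets: if `σ` is an involution,
`M₁ + M₂ = P + P.map σ` for some multiset `P` (a partition into mirrored pairs),
and neither `M₁` nor `M₂` contains a mirrored pair `{x, σ(x)}`, then
`M₂ = M₁.map σ`. -/
theorem multiset_mirrored_pair_cancellation
    {X : Type*} (σ : X → X) (hσ : σ ∘ σ = id)
    (M₁ M₂ P : Multiset X)
    (hP : M₁ + M₂ = P + P.map σ)
    (h₁ : ¬ ∃ x : X, ({x, σ x} : Multiset X) ≤ M₁)
    (h₂ : ¬ ∃ x : X, ({x, σ x} : Multiset X) ≤ M₂) :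
    M₂ = M₁.map σ := by
  classical
  have hinv : Function.Involutive σ := fun x => congrFun hσ x
  have hinj : Function.Injective σ := hinv.injective
  have hmap : ∀ (M : Multiset X) (z : X), (M.map σ).count z = M.count (σ z) := by
    intro M z
    conv_lhs => rw [← hinv z]
    rw [Multiset.count_map_eq_count' σ M hinj]
  -- key: no mirrored pair conditions in terms of counts
  have key : ∀ (M : Multiset X), (¬ ∃ y, ({y, σ y} : Multiset X) ≤ M) →
      ∀ y, σ y ≠ y → M.count y = 0 ∨ M.count (σ y) = 0 := by
    intro M hM y hy
    by_contra h
    push_neg at h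
    obtain ⟨h1, h2⟩ := h
    refine hM ⟨y, Multiset.le_iff_count.2 ?_⟩
    intro z
    have h1' : 1 ≤ M.count y := Nat.one_le_iff_ne_zero.2 h1
    have h2' : 1 ≤ M.count (σ y) := Nat.one_le_iff_ne_zero.2 h2
    simp only [Multiset.insert_eq_cons, Multiset.count_cons, Multiset.count_singleton]
    by_cases hz1 : z = y
    · subst hz1
      simp [Ne.symm hy]
      omega
    · by_cases hz2 : z = σ y
      · subst hz2
        simp [hz1]
        omega
      · simp [hz1, hz2]
  have keyfix : ∀ (M : Multiset X), (¬ ∃ y, ({y, σ y} : Multiset X) ≤ M) →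
      ∀ y, σ y = y → M.count y ≤ 1 := by
    intro M hM y hy
    by_contra h
    push_neg at h
    refine hM ⟨y, Multiset.le_iff_count.2 ?_⟩
    intro z
    simp only [Multiset.insert_eq_cons, Multiset.count_cons, Multiset.count_singleton, hy]
    by_cases hz : z = y
    · subst hz; simp; omega
    · simp [hz]
  have hc : ∀ z, M₁.count z + M₂.count z = P.count z + P.count (σ z) := by
    intro z
    have := congrArg (Multiset.count z) hP
    simpa [Multiset.count_add, hmap] using this
  ext x
  rw [hmap]
  by_cases hx : σ x = x
  · -- fixed point case
    have e := hc x
    rw [hx] at e ⊢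
    have b1 := keyfix M₁ h₁ x hx
    have b2 := keyfix M₂ h₂ x hx
    omega
  · have e1 := hc x
    have e2 := hc (σ x)
    rw [hinv x] at e2
    have k1 := key M₁ h₁ x hx
    have k2 := key M₂ h₂ x hx
    omega
end

section
/- Mirrored-pair partitions of multiples force fixed points and even multiplicity: Let X be a type and σ : X → X an involution (σ ∘ σ = id). Let M be a multiset over X containing no mirrored pair, i.e. there is no x ∈ X with the multiset {x, σ(x)} contained in M, and let n ≥ 1 be an integer such that the n-fold sum n•M can be partitioned into mirrored pairs, i.e. there is a multiset P over X with n•M = P + P.map σ. Then every element x occurring in M satisfies σ(x) = x, and if M is nonempty then n is even. (This is the combinatorial core of Corollary 1.9(2): if n·K is ribbon for a fibered knot K minimal under strongly homotopy-ribbon concordance, every prime factor of K is negative amphichiral, forcing its concordance order to be at most 2.) -/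
/-- Mirrored-pair partitions of multiples force fixed points and even multiplicity:
if `σ` is an involution, `M` contains no mirrored pair `{x, σ(x)}`, `n ≥ 1`, and
`n • M = P + P.map σ` for some multiset `P`, then every element of `M` is fixed by
`σ`, and `n` is even whenever `M` is nonempty. -/
theorem multiset_mirrored_pair_multiple
    {X : Type*} (σ : X → X) (hσ : σ ∘ σ = id)
    (M : Multiset X)
    (hM : ¬ ∃ x : X, ({x, σ x} : Multiset X) ≤ M)
    (n : ℕ) (hn : 1 ≤ n)
    (P : Multiset X) (hP : n • M = P + P.map σ) :
    (∀ x ∈ M, σ x = x) ∧ (M ≠ 0 → Even n) := by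
  classical
  have hσσ : ∀ x, σ (σ x) = x := fun x => congrFun hσ x
  have hinj : Function.Injective σ := Function.LeftInverse.injective hσσ
  -- count equation
  have hcount : ∀ x : X, n * M.count x = P.count x + P.count (σ x) := by
    intro x
    have h := congrArg (Multiset.count x) hP
    rw [Multiset.count_nsmul, Multiset.count_add] at h
    have hmap : (P.map σ).count x = P.count (σ x) := by
      conv_lhs => rw [← hσσ x]
      exact Multiset.count_map_eq_count' σ P hinj (σ x)
    rw [hmap] at h
    exact h
  have hsym : ∀ x : X, M.count x = M.count (σ x) := by
    intro x
    have h1 := hcount x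
    have h2 := hcount (σ x)
    rw [hσσ x] at h2
    have : n * M.count x = n * M.count (σ x) := by omega
    exact Nat.eq_of_mul_eq_mul_left hn this
  have hfix : ∀ x ∈ M, σ x = x := by
    intro x hx
    by_contra hne
    apply hM
    refine ⟨x, Multiset.le_iff_count.2 fun y => ?_⟩
    have hx1 : 1 ≤ M.count x := Multiset.one_le_count_iff_mem.2 hx
    have hx2 : 1 ≤ M.count (σ x) := by rw [← hsym x]; exact hx1
    simp only [Multiset.insert_eq_cons, Multiset.count_cons, Multiset.count_singleton]
    by_cases h1 : y = x
    · subst h1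
      simp [hne, Ne.symm hne]; exact hx1
    · by_cases h2 : y = σ x
      · simp [h1, h2, hne]; exact hx2
      · simp [h1, h2]
  refine ⟨hfix, fun hMne => ?_⟩
  obtain ⟨x, hx⟩ := Multiset.exists_mem_of_ne_zero hMne
  have hfx := hfix x hx
  -- count x M = 1
  have hle1 : M.count x ≤ 1 := by
    by_contra h
    push_neg at h
    apply hM
    refine ⟨x, Multiset.le_iff_count.2 fun y => ?_⟩
    rw [hfx]
    simp only [Multiset.insert_eq_cons, Multiset.count_cons, Multiset.count_singleton]
    by_cases h1 : y = x
    · subst h1; simp; omega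
    · simp [h1]
  have hge1 : 1 ≤ M.count x := Multiset.one_le_count_iff_mem.2 hx
  have hM1 : M.count x = 1 := le_antisymm hle1 hge1
  have := hcount x
  rw [hM1, hfx, mul_one] at this
  exact ⟨P.count x, this⟩
end

section
/- Straightening an involution commuting with a twisted element (group-theoretic form of Lemma 6.3): Let G be a group, k ≥ 1 an integer, and T₁, …, T_{2k} pairwise commuting elements of G (indices taken modulo 2k in {1, …, 2k}). Let φ, ι ∈ G satisfy: ι² = 1; φ·Tⱼ·φ⁻¹ = T_{j+1} for all j; ι·Tⱼ·ι⁻¹ = T_{j+k}⁻¹ for all j; and ι·φ·ι⁻¹ = φ·∏_{j=1}^{2k} Tⱼ^{nⱼ} for integers n₁, …, n_{2k} with n_{j+k} = nⱼ for all j and n₁ + ⋯ + n_k = 0. Define rⱼ := n₁ + ⋯ + n_{j−1} (so r₁ = 0) and ι' := ι·∏_{j=1}^{2k} Tⱼ^{rⱼ}. Then ι'² = 1 and ι'·φ·ι'⁻¹ = φ. (This is the computation proving Lemma 6.3: the Tⱼ are Dehn twists along the fixed boundary components, φ is the surface homeomorphism, and ι is an orientation-reversing free involution commuting with φ only up to boundary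 twists; multiplying ι by suitable boundary twists makes it commute on the nose.) -/
/-!
Write `P f = ∏_{j=1}^{2k} T_j ^ f_j`. Since the `T_j` commute, `f ↦ P f` is a homomorphism, and
conjugating by `φ` or `ι` shifts the exponents (and, for `ι`, negates them), provided `f` is
`2k`-periodic. The exponents `r_j` extend to the `k`-periodic discrete primitive `ρ` of `n`
(periodic because `n` is `k`-periodic with vanishing sum over a period). Then `ι P_ρ ι⁻¹ = P_ρ⁻¹`
gives `ι'² = 1`, and `φ⁻¹ P_ρ φ = P_{ρ(· + 1)} = P_n P_ρ` shows that conjugating by `P_ρ` turns `φ`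
into `φ P_n`, which conjugation by `ι` turns back into `φ`, because `ι P_n ι⁻¹ = P_n⁻¹`.
-/

open Finset Function

section ListProd

variable {M : Type*}

theorem List.prod_map_mul_of_commute [Monoid M] {α : Type*} (l : List α) {u v : α → M}
    (h : ∀ a b, Commute (u a) (v b)) :
    (l.map fun a => u a * v a).prod = (l.map u).prod * (l.map v).prod := by
  induction l with
  | nil => simp
  | cons a l ih =>
    have hva : Commute (v a) (l.map u).prod :=
      Commute.list_prod_right _ _ (by simpa using fun b _ => (h b a).symm)
    simp only [List.map_cons, List.prod_cons, ih, mul_assoc, ← mul_assoc (v a), hva.eq]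

variable [RightCancelMonoid M]

theorem List.prod_map_range_succ_of_commute {N : ℕ} {g : ℕ → M}
    (hcomm : ∀ i j, Commute (g i) (g j)) (hg : g N = g 0) :
    ((List.range N).map fun i => g (i + 1)).prod = ((List.range N).map g).prod := by
  apply mul_right_cancel (b := g 0)
  calc ((List.range N).map fun i => g (i + 1)).prod * g 0
      = g 0 * ((List.range N).map fun i => g (i + 1)).prod :=
        (Commute.list_prod_right _ _ (by simpa using fun i _ => hcomm _ _)).eq.symm
    _ = ((List.range (N + 1)).map g).prod := by simp [List.range_succ_eq_map, comp_def]
    _ = ((List.range N).map g).prod * g 0 := by simp [List.range_succ, hg]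

theorem List.prod_map_range_add_of_periodic {N : ℕ} {g : ℤ → M}
    (hcomm : ∀ i j, Commute (g i) (g j)) (hg : Periodic g N) (s : ℤ) :
    ((List.range N).map fun i : ℕ => g (i + s)).prod =
      ((List.range N).map fun i : ℕ => g i).prod := by
  have step : ∀ s : ℤ, ((List.range N).map fun i : ℕ => g (i + (s + 1))).prod =
      ((List.range N).map fun i : ℕ => g (i + s)).prod := fun s => by
    simpa only [Nat.cast_succ, add_right_comm _ (1 : ℤ), add_assoc] using
      List.prod_map_range_succ_of_commute (g := fun i : ℕ => g (i + s)) (fun _ _ => hcomm _ _)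
        (by simpa [add_comm] using hg s)
  induction s using Int.induction_on with
  | zero => simp
  | succ s ih => rw [step, ih]
  | pred s ih => rw [← ih, ← step, sub_add_cancel]

end ListProd

section Multitwist

variable {G : Type*} [Group G] {N : ℕ} {T : ℤ → G}

def multitwist (N : ℕ) (T : ℤ → G) (f : ℤ → ℤ) : G :=
  ((List.range N).map fun i : ℕ => T ((i : ℤ) + 1) ^ f ((i : ℤ) + 1)).prod

/-- Without the type ascription on `i`, the list on the left is `List.range N` coerced to
`List ℤ`. -/
theorem prod_map_range_eq_multitwist (f : ℤ → ℤ) :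
    ((List.range N).map fun i => T ((i : ℤ) + 1) ^ f ((i : ℤ) + 1)).prod = multitwist N T f := by
  simp only [List.pure_def, List.bind_eq_flatMap, ← List.map_eq_flatMap, List.map_map,
    multitwist, comp_def]

theorem multitwist_congr {f g : ℤ → ℤ} (h : ∀ j : ℤ, 1 ≤ j → j ≤ N → f j = g j) :
    multitwist N T f = multitwist N T g := by
  unfold multitwist
  congr 1
  refine List.map_congr_left fun i hi => ?_
  rw [List.mem_range] at hi
  rw [h _ (by omega) (by omega)]

theorem multitwist_zero : multitwist N T 0 = 1 := by
  simp [multitwist]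

theorem multitwist_add (hT : ∀ i j, Commute (T i) (T j)) (f g : ℤ → ℤ) :
    multitwist N T (f + g) = multitwist N T f * multitwist N T g := by
  simp only [multitwist, Pi.add_apply, zpow_add]
  exact List.prod_map_mul_of_commute _ fun _ _ => (hT _ _).zpow_zpow _ _

theorem multitwist_neg (hT : ∀ i j, Commute (T i) (T j)) (f : ℤ → ℤ) :
    multitwist N T (-f) = (multitwist N T f)⁻¹ :=
  eq_inv_of_mul_eq_one_left <| by rw [← multitwist_add hT, neg_add_cancel, multitwist_zero]

theorem conj_multitwist (hT : ∀ i j, Commute (T i) (T j)) (hTper : Periodic T N)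
    {f : ℤ → ℤ} (hf : Periodic f N) {c : G} {s e : ℤ}
    (hc : ∀ j, c * T j * c⁻¹ = T (j + s) ^ e) :
    c * multitwist N T f * c⁻¹ = multitwist N T fun j => e * f (j - s) := by
  let g : ℤ → G := fun j => T (j + 1) ^ (e * f (j + 1 - s))
  have hg : Periodic g N := fun j => by
    simp only [g]
    rw [add_right_comm j, hTper, add_sub_right_comm, hf]
  calc c * multitwist N T f * c⁻¹
      = ((List.range N).map fun i : ℕ => g (i + s)).prod := by
        rw [multitwist, ← MulAut.conj_apply, map_list_prod, List.map_map]
        refine congrArg _ (List.map_congr_left fun i _ => ?_)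
        simp only [comp_apply, MulAut.conj_apply, ← conj_zpow, hc, ← zpow_mul, g]
        ring_nf
    _ = multitwist N T fun j => e * f (j - s) :=
        List.prod_map_range_add_of_periodic (fun _ _ => (hT _ _).zpow_zpow _ _) hg s

theorem conj_multitwist_eq_inv {k : ℕ} (hT : ∀ i j, Commute (T i) (T j))
    (hTper : Periodic T (2 * k : ℕ)) {c : G} (hc : ∀ j, c * T j * c⁻¹ = (T (j + k))⁻¹)
    {f : ℤ → ℤ} (hf : Periodic f k) :
    c * multitwist (2 * k) T f * c⁻¹ = (multitwist (2 * k) T f)⁻¹ := by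
  rw [conj_multitwist hT hTper (by simpa using hf.nat_mul 2) (fun j => by rw [hc, zpow_neg_one]),
    ← multitwist_neg hT]
  congr 1
  funext j
  rw [← hf (j - k), sub_add_cancel, neg_one_mul, Pi.neg_apply]

theorem inv_conj_multitwist_eq_shift (hT : ∀ i j, Commute (T i) (T j)) (hTper : Periodic T N)
    {c : G} (hc : ∀ j, c * T j * c⁻¹ = T (j + 1)) {f : ℤ → ℤ} (hf : Periodic f N) :
    c⁻¹ * multitwist N T f * c = multitwist N T fun j => f (j + 1) := by
  have hcinv : ∀ j, c⁻¹ * T j * c⁻¹⁻¹ = T (j + -1) ^ (1 : ℤ) := fun j => by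
    have h := hc (j + -1)
    rw [neg_add_cancel_right] at h
    rw [zpow_one, inv_inv, ← h]
    group
  simpa only [inv_inv, one_mul, sub_neg_eq_add] using conj_multitwist hT hTper hf hcinv

end Multitwist

section PartialSum

/-- `∑_{i=1}^{j-1} n_i` read as an oriented sum, `-∑_{i=j}^{0} n_i` for `j ≤ 0`, so that it is
a primitive of `n` on all of `ℤ`. -/
noncomputable def partialSum (n : ℤ → ℤ) (j : ℤ) : ℤ :=
  ∑ i ∈ Ico 1 j, n i - ∑ i ∈ Ico j 1, n i

variable {n : ℤ → ℤ}

theorem partialSum_of_one_le {j : ℤ} (hj : 1 ≤ j) : partialSum n j = ∑ i ∈ Ico 1 j, n i := by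
  rw [partialSum, Ico_eq_empty_of_le hj, sum_empty, sub_zero]

theorem partialSum_add_one (j : ℤ) : partialSum n (j + 1) = partialSum n j + n j := by
  rcases le_or_gt 1 j with hj | hj
  · rw [partialSum_of_one_le hj, partialSum_of_one_le (by omega),
      sum_Ico_add_eq_sum_Ico_add_one hj]
  · rw [partialSum, partialSum, Ico_eq_empty_of_le (by omega : j + 1 ≤ 1),
      Ico_eq_empty_of_le hj.le, ← insert_Ico_add_one_left_eq_Ico hj, sum_insert (by simp)]
    ring

theorem partialSum_periodic {k : ℕ} (hn : Periodic n k) (hsum : ∑ i ∈ Icc 1 (k : ℤ), n i = 0) :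
    Periodic (partialSum n) k := by
  set d : ℤ → ℤ := fun j => partialSum n (j + k) - partialSum n j
  have hd : Periodic d 1 := fun j => by
    simp only [d, add_right_comm j 1, partialSum_add_one, hn j]
    ring
  have hd1 : d 1 = 0 := by
    simp only [d, partialSum_of_one_le le_rfl, Ico_self, sum_empty, sub_zero]
    rw [add_comm, partialSum_of_one_le (by omega), Ico_add_one_right_eq_Icc, hsum]
  intro j
  have hdj : d j = 0 := by simpa [hd1] using (hd.int_mul (j - 1)) 1
  exact sub_eq_zero.mp hdj

theorem inv_conj_multitwist_partialSum {G : Type*} [Group G] {k : ℕ} {T : ℤ → G}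
    (hT : ∀ i j, Commute (T i) (T j)) (hTper : Periodic T (2 * k : ℕ)) {c : G}
    (hc : ∀ j, c * T j * c⁻¹ = T (j + 1)) (hρ : Periodic (partialSum n) k) :
    c⁻¹ * multitwist (2 * k) T (partialSum n) * c =
      multitwist (2 * k) T n * multitwist (2 * k) T (partialSum n) := by
  rw [inv_conj_multitwist_eq_shift hT hTper hc (by simpa using hρ.nat_mul 2),
    ← multitwist_add hT]
  congr 1
  funext j
  rw [partialSum_add_one, Pi.add_apply, add_comm]

end PartialSum

theorem straighten_involution_general
    {G : Type*} [Group G] (k : ℕ)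
    (T : ℤ → G) (hTper : ∀ j : ℤ, T (j + 2 * (k : ℤ)) = T j)
    (hTcomm : ∀ i j : ℤ, Commute (T i) (T j))
    (φ ι : G) (hι : ι ^ 2 = 1)
    (hφT : ∀ j : ℤ, φ * T j * φ⁻¹ = T (j + 1))
    (hιT : ∀ j : ℤ, ι * T j * ι⁻¹ = (T (j + (k : ℤ)))⁻¹)
    (n : ℤ → ℤ)
    (hnk : ∀ j : ℤ, n (j + (k : ℤ)) = n j)
    (hnsum : ∑ j ∈ Finset.Icc (1 : ℤ) (k : ℤ), n j = 0)
    (hconj : ι * φ * ι⁻¹ =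
      φ * ((List.range (2 * k)).map fun i => T ((i : ℤ) + 1) ^ n ((i : ℤ) + 1)).prod)
    (r : ℤ → ℤ) (hr : ∀ j : ℤ, r j = ∑ i ∈ Finset.Ico (1 : ℤ) j, n i)
    (ι' : G) (hι' : ι' =
      ι * ((List.range (2 * k)).map fun i => T ((i : ℤ) + 1) ^ r ((i : ℤ) + 1)).prod) :
    ι' ^ 2 = 1 ∧ ι' * φ * ι'⁻¹ = φ := by
  have hTper' : Periodic T (2 * k : ℕ) := fun j => by simpa using hTper j
  have hρ : Periodic (partialSum n) k := partialSum_periodic hnk hnsum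
  have hι'ρ : ι' = ι * multitwist (2 * k) T (partialSum n) := by
    rw [hι', prod_map_range_eq_multitwist]
    exact congrArg _ (multitwist_congr fun j hj _ => by rw [hr, partialSum_of_one_le hj])
  rw [prod_map_range_eq_multitwist] at hconj
  have hφρ := inv_conj_multitwist_partialSum hTcomm hTper' hφT hρ
  have hιρ := conj_multitwist_eq_inv hTcomm hTper' hιT hρ
  have hιn := conj_multitwist_eq_inv hTcomm hTper' hιT hnk
  set P := multitwist (2 * k) T
  constructor
  · calc ι' ^ 2 = (ι * P (partialSum n) * ι⁻¹) * ι ^ 2 * P (partialSum n) := by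
          simp only [hι'ρ, sq]; group
      _ = 1 := by rw [hιρ, hι, mul_one, inv_mul_cancel]
  · calc ι' * φ * ι'⁻¹
        = (ι * φ * ι⁻¹) * (ι * (φ⁻¹ * P (partialSum n) * φ * (P (partialSum n))⁻¹) * ι⁻¹) := by
          rw [hι'ρ]; group
      _ = φ := by rw [hφρ, mul_inv_cancel_right, hconj, hιn, mul_inv_cancel_right]

/-- Straightening an involution commuting with a twisted element (group-theoretic
form of Lemma 6.3): let `T₁, …, T_{2k}` be pairwise commuting elements of a group
`G`, indexed by integers taken modulo `2k` (i.e. `T` is `2k`-periodic). Suppose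
`ι² = 1`, `φ·Tⱼ·φ⁻¹ = T_{j+1}`, `ι·Tⱼ·ι⁻¹ = T_{j+k}⁻¹`, and
`ι·φ·ι⁻¹ = φ·∏_{j=1}^{2k} Tⱼ^{nⱼ}` for `2k`-periodic integers `nⱼ` with
`n_{j+k} = nⱼ` and `n₁ + ⋯ + n_k = 0`. Set `rⱼ := n₁ + ⋯ + n_{j−1}` and
`ι' := ι·∏_{j=1}^{2k} Tⱼ^{rⱼ}`. Then `ι'² = 1` and `ι'·φ·ι'⁻¹ = φ`.
(Products over `j = 1, …, 2k` are written as ordered list products; since the `Tⱼ`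
pairwise commute, the order is immaterial.) -/
theorem straighten_involution
    {G : Type*} [Group G] (k : ℕ) (hk : 1 ≤ k)
    (T : ℤ → G) (hTper : ∀ j : ℤ, T (j + 2 * (k : ℤ)) = T j)
    (hTcomm : ∀ i j : ℤ, Commute (T i) (T j))
    (φ ι : G) (hι : ι ^ 2 = 1)
    (hφT : ∀ j : ℤ, φ * T j * φ⁻¹ = T (j + 1))
    (hιT : ∀ j : ℤ, ι * T j * ι⁻¹ = (T (j + (k : ℤ)))⁻¹)
    (n : ℤ → ℤ) (hnper : ∀ j : ℤ, n (j + 2 * (k : ℤ)) = n j)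
    (hnk : ∀ j : ℤ, n (j + (k : ℤ)) = n j)
    (hnsum : ∑ j ∈ Finset.Icc (1 : ℤ) (k : ℤ), n j = 0)
    (hconj : ι * φ * ι⁻¹ =
      φ * ((List.range (2 * k)).map fun i => T ((i : ℤ) + 1) ^ n ((i : ℤ) + 1)).prod)
    (r : ℤ → ℤ) (hr : ∀ j : ℤ, r j = ∑ i ∈ Finset.Ico (1 : ℤ) j, n i)
    (ι' : G) (hι' : ι' =
      ι * ((List.range (2 * k)).map fun i => T ((i : ℤ) + 1) ^ r ((i : ℤ) + 1)).prod) :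
    ι' ^ 2 = 1 ∧ ι' * φ * ι'⁻¹ = φ :=
  straighten_involution_general k T hTper hTcomm φ ι hι hφT hιT n hnk hnsum hconj r hr ι' hι'
end
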